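/- Let p be a prime, let F be the algebraic closure of the field with p elements, let G = SL₂(F), and let B ≤ G be the Borel subgroup of upper triangular matrices in G (those g with lower-left entry g₂₁ = 0). Let k be a field and let V = (G/B) →₀ k be the k-vector space with basis the left coset space G/B, on which G acts by left translation of the basis vectors. Then every k-linear endomorphism φ of V satisfying φ(g • v) = g • φ(v) for all g ∈ G and v ∈ V is a scalar: there exists c ∈ k with φ(v) = c • v for all v ∈ V. -/

import Mathlib

open Matrix

/-- The Borel subgroup of upper triangular matrices in `SL₂(R)`. -/
def upperBorel (R : Type*) [CommRing R] : Subgroup (SpecialLinearGroup (Fin 2) R) where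
  carrier := {g | (g : Matrix (Fin 2) (Fin 2) R) 1 0 = 0}
  one_mem' := by
    simp
  mul_mem' := by
    intro a b ha hb
    change (a.1 1 0 = 0) at ha
    change (b.1 1 0 = 0) at hb
    change (a.1 * b.1) 1 0 = 0
    simp only [Matrix.mul_apply, Fin.sum_univ_two]
    rw [ha, hb]; ring
  inv_mem' := by
    intro a ha
    change (a.1 1 0 = 0) at ha
    change (adjugate a.1) 1 0 = 0
    simp only [Matrix.adjugate_fin_two]
    simp [ha]

/-!
A `G`-equivariant endomorphism `φ` of the permutation module `k[G/B]` is determined by the image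
of the basis vector `e` of the base point, since `G` permutes the basis transitively. That image
is fixed by the stabilizer `B`, so its finite support is a union of `B`-orbits. For
`G = SL₂(R)` with `R` infinite, the unipotent matrices `!![1, t; 0, 1]` move every point of
`G/B` other than the base point to infinitely many distinct points, so `φ e` is a multiple of `e`.
-/

open MulAction Finsupp

namespace Finsupp

variable {α k : Type*} [Semiring k]

theorem orbit_subset_support_of_forall_mapDomain_eq (H : Type*) [Group H] [MulAction H α]
    {v : α →₀ k} (hv : ∀ h : H, v.mapDomain (h • ·) = v) {x : α} (hx : x ∈ v.support) :
    orbit H x ⊆ v.support := by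
  classical
  rintro _ ⟨h, rfl⟩
  rw [← hv h, mapDomain_support_of_injective (MulAction.injective h), Finset.coe_image]
  exact Set.mem_image_of_mem _ hx

theorem eq_single_of_forall_mapDomain_eq (H : Type*) [Group H] [MulAction H α]
    {v : α →₀ k} (hv : ∀ h : H, v.mapDomain (h • ·) = v) (x₀ : α)
    (horb : ∀ x ≠ x₀, (orbit H x).Infinite) :
    v = single x₀ (v x₀) := by
  rw [← support_subset_singleton]
  intro x hx
  rw [Finset.mem_singleton]
  by_contra hx₀
  exact (horb x hx₀).mono (orbit_subset_support_of_forall_mapDomain_eq H hv hx)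
    v.support.finite_toSet

end Finsupp

section PermutationModule

variable {G α k : Type*} [Group G] [MulAction G α] [CommSemiring k]

theorem eq_smul_of_equivariant_of_apply_single [IsPretransitive G α]
    {φ : (α →₀ k) →ₗ[k] (α →₀ k)}
    (hφ : ∀ (g : G) (v : α →₀ k), φ (v.mapDomain (g • ·)) = (φ v).mapDomain (g • ·))
    {x₀ : α} {c : k} (h₀ : φ (single x₀ 1) = single x₀ c) (v : α →₀ k) :
    φ v = c • v := by
  suffices φ = c • LinearMap.id by rw [this]; rfl
  refine lhom_ext fun x a => ?_
  obtain ⟨g, rfl⟩ := exists_smul_eq G x₀ x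
  have hx₀ : φ (single x₀ a) = single x₀ (a * c) := by
    rw [← smul_single_one, map_smul, h₀, Finsupp.smul_single, smul_eq_mul]
  calc φ (single (g • x₀) a) = (φ (single x₀ a)).mapDomain (g • ·) := by
        rw [← hφ, mapDomain_single]
    _ = c • single (g • x₀) a := by
        rw [hx₀, mapDomain_single, Finsupp.smul_single, smul_eq_mul, mul_comm]

theorem exists_eq_smul_of_equivariant [IsPretransitive G α] (x₀ : α)
    (horb : ∀ x ≠ x₀, (orbit (stabilizer G x₀) x).Infinite)
    (φ : (α →₀ k) →ₗ[k] (α →₀ k))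
    (hφ : ∀ (g : G) (v : α →₀ k), φ (v.mapDomain (g • ·)) = (φ v).mapDomain (g • ·)) :
    ∃ c : k, ∀ v, φ v = c • v := by
  have hfix : ∀ h : stabilizer G x₀,
      (φ (single x₀ 1)).mapDomain (h • ·) = φ (single x₀ 1) := fun h => by
    rw [show (h • · : α → α) = ((h : G) • ·) from rfl, ← hφ, mapDomain_single]
    exact congrArg (fun x => φ (single x 1)) h.2
  exact ⟨_, eq_smul_of_equivariant_of_apply_single hφ
    (eq_single_of_forall_mapDomain_eq _ hfix x₀ horb)⟩

end PermutationModule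

section SL2

open scoped MatrixGroups

variable {R : Type*} [CommRing R]

theorem mem_upperBorel_iff (g : SL(2, R)) : g ∈ upperBorel R ↔ g 1 0 = 0 :=
  Iff.rfl

def upperUnipotent (t : R) : SL(2, R) :=
  ⟨!![1, t; 0, 1], by simp [det_fin_two]⟩

@[simp]
theorem coe_upperUnipotent (t : R) : (upperUnipotent t : Matrix (Fin 2) (Fin 2) R) = !![1, t; 0, 1] :=
  rfl

theorem upperUnipotent_mem_upperBorel (t : R) : upperUnipotent t ∈ upperBorel R := by
  simp [mem_upperBorel_iff]

theorem upperUnipotent_mul_inv_mul_upperUnipotent_mul_apply_one_zero (s t : R) (g : SL(2, R)) :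
    ((upperUnipotent s * g)⁻¹ * (upperUnipotent t * g)) 1 0 = (s - t) * g 1 0 ^ 2 := by
  simp [adjugate_fin_two, Matrix.mul_apply, vecMul, dotProduct]
  ring

theorem orbit_stabilizer_upperBorel_infinite [NoZeroDivisors R] [Infinite R]
    (x : SL(2, R) ⧸ upperBorel R) (hx : x ≠ ((1 : SL(2, R)) : SL(2, R) ⧸ upperBorel R)) :
    (orbit (stabilizer SL(2, R) ((1 : SL(2, R)) : SL(2, R) ⧸ upperBorel R)) x).Infinite := by
  obtain ⟨g, rfl⟩ := QuotientGroup.mk_surjective x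
  have hg : g 1 0 ≠ 0 := fun h =>
    hx <| QuotientGroup.eq.mpr <| by simpa using (upperBorel R).inv_mem h
  have hstab (t : R) :
      upperUnipotent t ∈ stabilizer SL(2, R) ((1 : SL(2, R)) : SL(2, R) ⧸ upperBorel R) := by
    rw [stabilizer_quotient]
    exact upperUnipotent_mem_upperBorel t
  refine Set.infinite_of_injective_forall_mem (f := fun t => (⟨_, hstab t⟩ :
    stabilizer _ _) • (g : SL(2, R) ⧸ upperBorel R)) (fun s t hst => ?_) fun t => ⟨_, rfl⟩
  have hB : (upperUnipotent s * g)⁻¹ * (upperUnipotent t * g) ∈ upperBorel R :=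
    QuotientGroup.eq.mp hst
  rw [mem_upperBorel_iff, upperUnipotent_mul_inv_mul_upperUnipotent_mul_apply_one_zero] at hB
  exact sub_eq_zero.mp <| (mul_eq_zero.mp hB).resolve_right (pow_ne_zero 2 hg)

end SL2

/-- Remark 3.2 / Section 2: for `G = SL₂(𝔽̄_p)`, `B` the upper-triangular Borel,
and `V = k[G/B]` (with `G` acting by left translation of basis vectors), every
`G`-equivariant `k`-linear endomorphism of `V` is a scalar. -/
theorem stmt_9 (p : ℕ) [Fact p.Prime] (k : Type*) [Field k]
    (φ : ((SpecialLinearGroup (Fin 2) (AlgebraicClosure (ZMod p)) ⧸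
            upperBorel (AlgebraicClosure (ZMod p))) →₀ k) →ₗ[k]
         ((SpecialLinearGroup (Fin 2) (AlgebraicClosure (ZMod p)) ⧸
            upperBorel (AlgebraicClosure (ZMod p))) →₀ k))
    (hφ : ∀ (g : SpecialLinearGroup (Fin 2) (AlgebraicClosure (ZMod p)))
        (v : (SpecialLinearGroup (Fin 2) (AlgebraicClosure (ZMod p)) ⧸
            upperBorel (AlgebraicClosure (ZMod p))) →₀ k),
        φ (Finsupp.mapDomain (fun x => g • x) v) =
          Finsupp.mapDomain (fun x => g • x) (φ v)) :
    ∃ c : k, ∀ v, φ v = c • v :=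
  exists_eq_smul_of_equivariant _ orbit_stabilizer_upperBorel_infinite φ hφ
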